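/- Let H : ℝⁿ → ℝ be convex, twice continuously differentiable, and satisfy H(0) = 0, ∇H(0) = 0, and positive definiteness of the Hessian of H at 0 (i.e., ⟨v, D(∇H)(0) v⟩ > 0 for all v ≠ 0). Let J, R : ℝⁿ → ℝⁿˣⁿ assign to each state a skew-symmetric matrix J(x) and a symmetric positive semidefinite matrix R(x). Then every solution of the unforced port-Hamiltonian system is bounded: if x : ℝ → ℝⁿ satisfies ẋ(t) = (J(x(t)) − R(x(t))) ∇H(x(t)) for all t ≥ t₀, then there exists C such that ‖x(t)‖ ≤ C for all t ≥ t₀. -/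

import Mathlib

/-! `t ↦ H (x t)` is a Lyapunov function: its derivative `⟪∇H, (J - R) ∇H⟫ = -⟪∇H, R ∇H⟫` is
nonpositive, so the solution stays in the sublevel set `{H ≤ H (x t₀)}`. The positive Hessian
makes `H` positive near `0` on every ray, and convexity with `H 0 = 0` (`H (s • v) ≤ s * H v`)
spreads this to all `v ≠ 0`. So `H` has a positive minimum `c` on the unit sphere and
`H v ≥ c * ‖v‖` outside the unit ball, whence sublevel sets are bounded. -/

open Matrix RealInnerProductSpace

/-- The gradient of a function on `ℝⁿ` (Euclidean space), via Mathlib's `gradient`. -/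
noncomputable def grad {n : ℕ} (H : EuclideanSpace ℝ (Fin n) → ℝ) :
    EuclideanSpace ℝ (Fin n) → EuclideanSpace ℝ (Fin n) := gradient H

open Set Topology

theorem Matrix.dotProduct_mulVec_self_eq_zero_of_transpose_eq_neg {ι R : Type*} [Fintype ι]
    [CommRing R] [IsAddTorsionFree R] {J : Matrix ι ι R} (hJ : Jᵀ = -J) (v : ι → R) :
    v ⬝ᵥ J *ᵥ v = 0 := by
  have h : v ⬝ᵥ J *ᵥ v = -(v ⬝ᵥ J *ᵥ v) := by
    conv_lhs => rw [dotProduct_mulVec, ← mulVec_transpose, hJ, dotProduct_comm]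
    rw [neg_mulVec, dotProduct_neg]
  exact self_eq_neg.mp h

theorem Matrix.dotProduct_sub_mulVec_self_nonpos {ι R : Type*} [Fintype ι] [CommRing R]
    [LinearOrder R] [IsStrictOrderedRing R] {J S : Matrix ι ι R} (hJ : Jᵀ = -J)
    (hS : ∀ v, 0 ≤ v ⬝ᵥ S *ᵥ v) (v : ι → R) : v ⬝ᵥ (J - S) *ᵥ v ≤ 0 := by
  rw [sub_mulVec, dotProduct_sub, dotProduct_mulVec_self_eq_zero_of_transpose_eq_neg hJ, zero_sub]
  exact neg_nonpos.mpr (hS v)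

theorem ConvexOn.apply_smul_le_mul {𝕜 E : Type*} [Field 𝕜] [LinearOrder 𝕜] [IsStrictOrderedRing 𝕜]
    [AddCommGroup E] [Module 𝕜 E] {f : E → 𝕜} (hf : ConvexOn 𝕜 univ f) (h0 : f 0 = 0)
    {t : 𝕜} (ht0 : 0 ≤ t) (ht1 : t ≤ 1) (v : E) : f (t • v) ≤ t * f v := by
  simpa [h0] using hf.2 (mem_univ v) (mem_univ 0) ht0 (sub_nonneg.2 ht1) (add_sub_cancel t 1)

section Normed

variable {E : Type*} [NormedAddCommGroup E] [NormedSpace ℝ E] {H : E → ℝ}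

theorem ConvexOn.mul_norm_le_of_le_on_sphere (hconv : ConvexOn ℝ univ H) (h0 : H 0 = 0) {c : ℝ}
    (hc : ∀ u ∈ Metric.sphere (0 : E) 1, c ≤ H u) {v : E} (hv : 1 ≤ ‖v‖) : c * ‖v‖ ≤ H v := by
  have hv0 : 0 < ‖v‖ := zero_lt_one.trans_le hv
  have hu : ‖v‖⁻¹ • v ∈ Metric.sphere (0 : E) 1 := by
    simp [norm_smul, hv0.ne']
  calc c * ‖v‖ ≤ (‖v‖⁻¹ * H v) * ‖v‖ := by
        gcongr
        exact (hc _ hu).trans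
          (hconv.apply_smul_le_mul h0 (by positivity) (inv_le_one_of_one_le₀ hv) v)
    _ = H v := by field_simp

theorem ConvexOn.isBounded_sublevel_of_pos [FiniteDimensional ℝ E] (hconv : ConvexOn ℝ univ H)
    (hcont : Continuous H) (h0 : H 0 = 0) (hpos : ∀ v, v ≠ 0 → 0 < H v) (M : ℝ) :
    Bornology.IsBounded {v | H v ≤ M} := by
  rcases subsingleton_or_nontrivial E with _ | _
  · exact Bornology.IsBounded.all _
  obtain ⟨u, hu, hmin⟩ := (isCompact_sphere (0 : E) 1).exists_isMinOn
    (NormedSpace.sphere_nonempty.2 zero_le_one) hcont.continuousOn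
  have hu0 : 0 < H u := hpos u (ne_zero_of_mem_unit_sphere ⟨u, hu⟩)
  refine (Metric.isBounded_iff_subset_closedBall 0).2 ⟨max 1 (M / H u), fun v hv => ?_⟩
  rw [mem_closedBall_zero_iff]
  rcases le_or_gt ‖v‖ 1 with h1 | h1
  · exact h1.trans (le_max_left _ _)
  · refine le_max_of_le_right ((le_div_iff₀' hu0).2 ?_)
    exact (hconv.mul_norm_le_of_le_on_sphere h0 hmin h1.le).trans hv

end Normed

section Gradient

variable {F : Type*} [NormedAddCommGroup F] [InnerProductSpace ℝ F] [CompleteSpace F] {H : F → ℝ}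

theorem HasGradientAt.comp_hasDerivAt {g : F} {c : ℝ → F} {c' : F} {t : ℝ}
    (hH : HasGradientAt H g (c t)) (hc : HasDerivAt c c' t) :
    HasDerivAt (fun s => H (c s)) ⟪g, c'⟫ t := by
  simpa [Function.comp_def] using hH.hasFDerivAt.comp_hasDerivAt t hc

theorem ContDiff.gradient {k m : WithTop ℕ∞} (hH : ContDiff ℝ m H) (hk : k + 1 ≤ m) :
    ContDiff ℝ k (gradient H) :=
  (InnerProductSpace.toDual ℝ F).symm.contDiff.comp (hH.fderiv_right hk)

theorem antitoneOn_comp_of_inner_gradient_nonpos (hH : Differentiable ℝ H) {f : F → F}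
    (hf : ∀ y, ⟪gradient H y, f y⟫ ≤ 0) {x : ℝ → F} {t₀ : ℝ}
    (hx : ∀ t, t₀ ≤ t → HasDerivAt x (f (x t)) t) :
    AntitoneOn (fun t => H (x t)) (Ici t₀) := by
  have hE : ∀ t, t₀ ≤ t → HasDerivAt (fun s => H (x s)) ⟪gradient H (x t), f (x t)⟫ t :=
    fun t ht => (hH _).hasGradientAt.comp_hasDerivAt (hx t ht)
  refine antitoneOn_of_deriv_nonpos (convex_Ici t₀)
    (fun t ht => (hE t ht).continuousAt.continuousWithinAt) ?_ ?_ <;> rw [interior_Ici]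
  · exact fun t ht => (hE t (le_of_lt ht)).differentiableAt.differentiableWithinAt
  · exact fun t ht => (hE t (le_of_lt ht)).deriv ▸ hf (x t)

/-- Along the ray `s ↦ s • v`, `φ s = ⟪∇H (s • v), v⟫` vanishes at `0` with positive derivative,
so `H (s • v) > 0` for small `s > 0`; convexity with `H 0 = 0` gives `H (s • v) ≤ s * H v`. -/
theorem ConvexOn.pos_of_inner_fderiv_gradient_pos (hconv : ConvexOn ℝ univ H)
    (hH : Differentiable ℝ H) (hgrad : DifferentiableAt ℝ (gradient H) 0) (h0 : H 0 = 0)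
    (hgrad0 : gradient H 0 = 0) {v : F} (hv : 0 < ⟪v, fderiv ℝ (gradient H) 0 v⟫) :
    0 < H v := by
  set φ : ℝ → ℝ := fun s => ⟪gradient H (s • v), v⟫
  have hline : ∀ s : ℝ, HasDerivAt (fun s : ℝ => s • v) v s := fun s => by
    simpa using (hasDerivAt_id s).smul_const v
  have hψ : ∀ s, HasDerivAt (fun s : ℝ => H (s • v)) (φ s) s :=
    fun s => (hH _).hasGradientAt.comp_hasDerivAt (hline s)
  have hφ : HasDerivAt φ ⟪fderiv ℝ (gradient H) 0 v, v⟫ 0 := by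
    have hg : HasFDerivAt (gradient H) (fderiv ℝ (gradient H) 0) ((0 : ℝ) • v) := by
      simpa using hgrad.hasFDerivAt
    simpa only [Function.comp_def, inner_zero_right, zero_add] using
      (hg.comp_hasDerivAt 0 (hline 0)).inner ℝ (hasDerivAt_const 0 v)
  have hφpos : ∀ᶠ s in 𝓝[>] 0, 0 < φ s := by
    have hslope := (hasDerivAt_iff_tendsto_slope.mp hφ).mono_left (nhdsGT_le_nhdsNE 0)
    filter_upwards [hslope.eventually (eventually_gt_nhds (real_inner_comm v _ ▸ hv)),
      self_mem_nhdsWithin] with s hs hs0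
    exact pos_of_slope_pos hs0 hs (by simp only [φ, zero_smul, hgrad0, inner_zero_left])
  obtain ⟨u, hu, hsub⟩ := mem_nhdsGT_iff_exists_Ioo_subset.mp hφpos
  have hδ : 0 < min u 1 := lt_min hu zero_lt_one
  obtain ⟨ξ, hξ, hmvt⟩ := exists_hasDerivAt_eq_slope (fun s : ℝ => H (s • v)) φ hδ
    (fun s _ => (hψ s).continuousAt.continuousWithinAt) (fun s _ => hψ s)
  have hHδ : 0 < H (min u 1 • v) := by
    have : 0 < φ ξ := hsub ⟨hξ.1, hξ.2.trans_le (min_le_left _ _)⟩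
    rw [hmvt] at this
    simpa [h0, hδ] using this
  exact pos_of_mul_pos_right
    (hHδ.trans_le (hconv.apply_smul_le_mul h0 hδ.le (min_le_right _ _) v)) hδ.le

end Gradient

theorem phs_solutions_bounded_general {n : ℕ}
    (H : EuclideanSpace ℝ (Fin n) → ℝ)
    (hconv : ConvexOn ℝ Set.univ H)
    (hsmooth : ContDiff ℝ 2 H)
    (h0 : H 0 = 0)
    (hgrad0 : grad H 0 = 0)
    (hhess : ∀ v : EuclideanSpace ℝ (Fin n), v ≠ 0 → 0 < ⟪v, fderiv ℝ (grad H) 0 v⟫)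
    (J R : EuclideanSpace ℝ (Fin n) → Matrix (Fin n) (Fin n) ℝ)
    (hJ : ∀ y, (J y)ᵀ = -(J y))
    (hRpsd : ∀ y, ∀ v : Fin n → ℝ, 0 ≤ v ⬝ᵥ (R y).mulVec v)
    (t₀ : ℝ) (x : ℝ → EuclideanSpace ℝ (Fin n))
    (hx : ∀ t : ℝ, t₀ ≤ t →
      HasDerivAt x (WithLp.toLp 2 ((J (x t) - R (x t)).mulVec (grad H (x t)))) t) :
    ∃ C : ℝ, ∀ t : ℝ, t₀ ≤ t → ‖x t‖ ≤ C := by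
  have hH : Differentiable ℝ H := hsmooth.differentiable (by norm_num)
  have hgrad : DifferentiableAt ℝ (grad H) 0 :=
    (hsmooth.gradient (k := 1) (by norm_num)).differentiable one_ne_zero 0
  have hpos : ∀ v, v ≠ 0 → 0 < H v := fun v hv =>
    hconv.pos_of_inner_fderiv_gradient_pos hH hgrad h0 hgrad0 (hhess v hv)
  have hdiss : ∀ y, ⟪grad H y, WithLp.toLp 2 ((J y - R y) *ᵥ grad H y)⟫ ≤ 0 := fun y => by
    rw [EuclideanSpace.inner_eq_star_dotProduct, star_trivial, dotProduct_comm]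
    exact dotProduct_sub_mulVec_self_nonpos (hJ y) (hRpsd y) _
  have hanti := antitoneOn_comp_of_inner_gradient_nonpos hH hdiss hx
  obtain ⟨C, hC⟩ := isBounded_iff_forall_norm_le.1
    (hconv.isBounded_sublevel_of_pos hsmooth.continuous h0 hpos (H (x t₀)))
  exact ⟨C, fun t ht => hC _ (hanti self_mem_Ici ht ht)⟩

/-- For a convex, twice continuously differentiable Hamiltonian `H`
with `H(0) = 0`, `∇H(0) = 0`, and positive definite Hessian at `0`, every solution of
the unforced port-Hamiltonian system `ẋ = (J(x) - R(x)) ∇H(x)` on `[t₀, ∞)` is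
bounded. -/
theorem phs_solutions_bounded {n : ℕ}
    (H : EuclideanSpace ℝ (Fin n) → ℝ)
    (hconv : ConvexOn ℝ Set.univ H)
    (hsmooth : ContDiff ℝ 2 H)
    (h0 : H 0 = 0)
    (hgrad0 : grad H 0 = 0)
    (hhess : ∀ v : EuclideanSpace ℝ (Fin n), v ≠ 0 → 0 < ⟪v, fderiv ℝ (grad H) 0 v⟫)
    (J R : EuclideanSpace ℝ (Fin n) → Matrix (Fin n) (Fin n) ℝ)
    (hJ : ∀ y, (J y)ᵀ = -(J y))
    (hRsym : ∀ y, (R y)ᵀ = R y)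
    (hRpsd : ∀ y, ∀ v : Fin n → ℝ, 0 ≤ v ⬝ᵥ (R y).mulVec v)
    (t₀ : ℝ) (x : ℝ → EuclideanSpace ℝ (Fin n))
    (hx : ∀ t : ℝ, t₀ ≤ t →
      HasDerivAt x (WithLp.toLp 2 ((J (x t) - R (x t)).mulVec (grad H (x t)))) t) :
    ∃ C : ℝ, ∀ t : ℝ, t₀ ≤ t → ‖x t‖ ≤ C :=
  phs_solutions_bounded_general H hconv hsmooth h0 hgrad0 hhess J R hJ hRpsd t₀ x hx
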